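/- Let G be connected with a closed labeling. The quotient graph G/∼ on the exchangeability classes E_1 < ... < E_r, with {E_a, E_b} an edge iff some (equivalently, every) i ∈ E_a, j ∈ E_b satisfy {i,j} ∈ E(G), is connected, collapsed, and closed with respect to the induced labeling. -/

import Mathlib

def IsClosedLabeling {n : ℕ} (G : SimpleGraph (Fin n)) : Prop :=
  ∀ u v w : Fin n, G.Adj v u → G.Adj v w → u ≠ w →
    ((v < u ∧ v < w) ∨ (u < v ∧ w < v)) → G.Adj u w

def fullNbhd {V : Type*} (G : SimpleGraph V) (v : V) : Set V :=
  {v} ∪ G.neighborSet v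

def exchClasses {n : ℕ} (G : SimpleGraph (Fin n)) : Set (Set (Fin n)) :=
  {S | ∃ v : Fin n, S = {w : Fin n | fullNbhd G w = fullNbhd G v}}

/-- The quotient graph `G/∼` on the exchangeability classes. -/
def quotientGraph {n : ℕ} (G : SimpleGraph (Fin n)) : SimpleGraph (exchClasses G) where
  Adj A B := A ≠ B ∧ ∃ a ∈ (A : Set (Fin n)), ∃ b ∈ (B : Set (Fin n)), G.Adj a b
  symm := by
    constructor
    rintro A B ⟨h, a, ha, b, hb, hab⟩
    exact ⟨h.symm, b, hb, a, ha, hab.symm⟩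
  loopless := by constructor; rintro A ⟨h, -⟩; exact h rfl

/-- Closedness of a graph with respect to an arbitrary strict order relation on
its vertices. -/
def IsClosedWrt {V : Type*} (G : SimpleGraph V) (lt : V → V → Prop) : Prop :=
  ∀ u v w : V, G.Adj v u → G.Adj v w → u ≠ w →
    ((lt v u ∧ lt v w) ∨ (lt u v ∧ lt w v)) → G.Adj u w

/-! Two vertices are adjacent in `G/∼` exactly when their classes differ and the vertices are
adjacent in `G`, because adjacency only depends on the classes. Hence `N[a]` is the union of the
classes in the closed neighbourhood of `[a]` in `G/∼`, so equal neighbourhoods in `G/∼` force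
equal neighbourhoods in `G`, and closedness of `G/∼` is that of `G` read off on representatives. -/

lemma mem_fullNbhd_iff {V : Type*} {G : SimpleGraph V} {a x : V} :
    x ∈ fullNbhd G a ↔ x = a ∨ G.Adj a x := by
  simp [fullNbhd, eq_comm]

lemma self_mem_fullNbhd {V : Type*} (G : SimpleGraph V) (a : V) : a ∈ fullNbhd G a :=
  mem_fullNbhd_iff.mpr (Or.inl rfl)

lemma mem_fullNbhd_comm {V : Type*} {G : SimpleGraph V} {a x : V} :
    x ∈ fullNbhd G a ↔ a ∈ fullNbhd G x := by
  simp only [mem_fullNbhd_iff, eq_comm, G.adj_comm]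

section ExchangeClass

variable {n : ℕ} {G : SimpleGraph (Fin n)}

def exchClass (G : SimpleGraph (Fin n)) (v : Fin n) : exchClasses G :=
  ⟨{w | fullNbhd G w = fullNbhd G v}, v, rfl⟩

lemma mem_exchClass_iff {v w : Fin n} :
    w ∈ (exchClass G v : Set (Fin n)) ↔ fullNbhd G w = fullNbhd G v :=
  Iff.rfl

lemma exchClass_surjective : Function.Surjective (exchClass G) := fun A =>
  let ⟨v, hv⟩ := A.2
  ⟨v, Subtype.ext hv.symm⟩

lemma exchClass_eq_exchClass_iff {v w : Fin n} :
    exchClass G v = exchClass G w ↔ fullNbhd G v = fullNbhd G w := by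
  refine ⟨fun h => (h ▸ rfl : v ∈ (exchClass G w : Set (Fin n))), fun h => ?_⟩
  exact Subtype.ext (Set.ext fun x => by simp only [mem_exchClass_iff, h])

lemma quotientGraph_adj_exchClass_iff {a b : Fin n} :
    (quotientGraph G).Adj (exchClass G a) (exchClass G b) ↔
      exchClass G a ≠ exchClass G b ∧ G.Adj a b := by
  refine ⟨fun ⟨hne, a', ha', b', hb', hadj⟩ => ⟨hne, ?_⟩,
    fun ⟨hne, hadj⟩ => ⟨hne, a, rfl, b, rfl, hadj⟩⟩
  have hb'a : b' ∈ fullNbhd G a := mem_exchClass_iff.mp ha' ▸ mem_fullNbhd_iff.mpr (Or.inr hadj)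
  have hab : a ∈ fullNbhd G b := mem_exchClass_iff.mp hb' ▸ mem_fullNbhd_comm.mp hb'a
  rcases mem_fullNbhd_iff.mp hab with rfl | hba
  · exact (hne rfl).elim
  · exact hba.symm

lemma exchClass_mem_fullNbhd_quotientGraph_iff {a x : Fin n} :
    exchClass G x ∈ fullNbhd (quotientGraph G) (exchClass G a) ↔ x ∈ fullNbhd G a := by
  by_cases hxa : exchClass G x = exchClass G a
  · have hx : x ∈ fullNbhd G a := exchClass_eq_exchClass_iff.mp hxa ▸ self_mem_fullNbhd G x
    exact ⟨fun _ => hx, fun _ => hxa ▸ self_mem_fullNbhd _ _⟩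
  · have hx : x ≠ a := fun h => hxa (h ▸ rfl)
    simp only [mem_fullNbhd_iff, hxa, hx, quotientGraph_adj_exchClass_iff, Ne.symm hxa,
      false_or, ne_eq, not_false_eq_true, true_and]

lemma reachable_exchClass_of_reachable {a b : Fin n} (h : G.Reachable a b) :
    (quotientGraph G).Reachable (exchClass G a) (exchClass G b) := by
  rw [SimpleGraph.reachable_iff_reflTransGen] at h ⊢
  refine h.lift' (exchClass G) fun u v huv => ?_
  change Relation.ReflTransGen _ (exchClass G u) (exchClass G v)
  by_cases huv' : exchClass G u = exchClass G v
  · exact huv' ▸ Relation.ReflTransGen.refl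
  · exact .single (quotientGraph_adj_exchClass_iff.mpr ⟨huv', huv⟩)

theorem quotientGraph_connected (hconn : G.Connected) : (quotientGraph G).Connected := by
  have : Nonempty (exchClasses G) := hconn.nonempty.map (exchClass G)
  refine ⟨fun A B => ?_⟩
  obtain ⟨a, rfl⟩ := exchClass_surjective A
  obtain ⟨b, rfl⟩ := exchClass_surjective B
  exact reachable_exchClass_of_reachable (hconn a b)

theorem quotientGraph_collapsed {A B : exchClasses G}
    (h : fullNbhd (quotientGraph G) A = fullNbhd (quotientGraph G) B) : A = B := by
  obtain ⟨a, rfl⟩ := exchClass_surjective A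
  obtain ⟨b, rfl⟩ := exchClass_surjective B
  refine exchClass_eq_exchClass_iff.mpr (Set.ext fun x => ?_)
  rw [← exchClass_mem_fullNbhd_quotientGraph_iff, h, exchClass_mem_fullNbhd_quotientGraph_iff]

theorem quotientGraph_isClosedWrt (hG : IsClosedLabeling G) :
    IsClosedWrt (quotientGraph G)
      (fun A B => ∀ a ∈ (A : Set (Fin n)), ∀ b ∈ (B : Set (Fin n)), a < b) := by
  intro U V W hVU hVW hUW hord
  obtain ⟨u, rfl⟩ := exchClass_surjective U
  obtain ⟨v, rfl⟩ := exchClass_surjective V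
  obtain ⟨w, rfl⟩ := exchClass_surjective W
  have hvu := (quotientGraph_adj_exchClass_iff.mp hVU).2
  have hvw := (quotientGraph_adj_exchClass_iff.mp hVW).2
  have huw : u ≠ w := fun h => hUW (h ▸ rfl)
  refine quotientGraph_adj_exchClass_iff.mpr ⟨hUW, hG u v w hvu hvw huw ?_⟩
  rcases hord with ⟨hvu', hvw'⟩ | ⟨huv', hwv'⟩
  · exact .inl ⟨hvu' v rfl u rfl, hvw' v rfl w rfl⟩
  · exact .inr ⟨huv' u rfl v rfl, hwv' w rfl v rfl⟩

end ExchangeClass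

theorem quotientGraph_connected_collapsed_closed {n : ℕ} (G : SimpleGraph (Fin n))
    (hconn : G.Connected) (hG : IsClosedLabeling G) :
    (quotientGraph G).Connected ∧
    (∀ A B : exchClasses G,
      fullNbhd (quotientGraph G) A = fullNbhd (quotientGraph G) B → A = B) ∧
    IsClosedWrt (quotientGraph G)
      (fun A B => ∀ a ∈ (A : Set (Fin n)), ∀ b ∈ (B : Set (Fin n)), a < b) :=
  ⟨quotientGraph_connected hconn, fun _ _ => quotientGraph_collapsed,
    quotientGraph_isClosedWrt hG⟩
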